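/- For every pair of distinct vertices u, v of G^r that are not adjacent in G^r, the graph obtained from G^r by adding the single edge {u, v} is not chordal. Consequently, since G^r itself is not chordal, every chordal graph on the same six vertices containing G^r as a subgraph has at least two more edges than G^r, so H^r (which adds exactly two edges) is a minimal chordal extension of G^r. -/

import Mathlib

/-- Vertices of the LMBM3 real pattern: a bus in `{1,2,3}` (encoded as `Fin 3`,
with bus `1 ↦ 0`, `2 ↦ 1`, `3 ↦ 2`) together with a real/imaginary tag
(`Re ↦ 0`, `Im ↦ 1`). -/
abbrev LMBM3.V := Fin 3 × Fin 2

/-- The graph `G^r`: the complete tripartite graph `K_{2,2,2}` on the six vertices,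
two vertices being adjacent iff they have distinct bus indices. -/
def LMBM3.Gr : SimpleGraph LMBM3.V where
  Adj u v := u.1 ≠ v.1
  symm := ⟨fun _ _ h => h.symm⟩
  loopless := ⟨fun _ h => h rfl⟩

/-- The graph `H^r`: `G^r` together with the two additional edges
`{2_Re, 2_Im}` and `{3_Re, 3_Im}`. -/
def LMBM3.Hr : SimpleGraph LMBM3.V :=
  LMBM3.Gr ⊔ SimpleGraph.fromEdgeSet
    {s(((1 : Fin 3), (0 : Fin 2)), ((1 : Fin 3), (1 : Fin 2))),
     s(((2 : Fin 3), (0 : Fin 2)), ((2 : Fin 3), (1 : Fin 2)))}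

/-- A graph is chordal iff it has no induced cycle of length at least `4`,
i.e. no graph embedding of a cycle graph `C_n` with `n ≥ 4`. -/
def SimpleGraph.IsChordal {α : Type*} (G : SimpleGraph α) : Prop :=
  ∀ n : ℕ, 4 ≤ n → IsEmpty (SimpleGraph.cycleGraph n ↪g G)

/-!
Two vertices of `G^r` are non-adjacent exactly when they lie on the same bus, so for any two
distinct buses `j, k` whose pairs are still unjoined, `j_Re, k_Re, j_Im, k_Im` is an induced
4-cycle. Adding one edge joins at most one bus pair, so `G^r` plus one edge is never chordal,
and the edge count of any chordal extension goes up by at least two. Conversely, an induced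
cycle of length `≥ 4` has two disjoint non-edges (between vertices `0, 2` and `1, 3`), while
`H^r` misses only the single edge `{1_Re, 1_Im}`.
-/

namespace Set

theorem ncard_add_two_le_of_ssubset {α : Type*} {A B : Set α} (hB : B.Finite) (hAB : A ⊂ B)
    (hins : ∀ e ∈ B, e ∉ A → B ≠ insert e A) : A.ncard + 2 ≤ B.ncard := by
  have hdiff : (B \ A).ncard = B.ncard - A.ncard := ncard_sdiff' hAB.subset hB
  have hpos : (B \ A).ncard ≠ 0 :=
    ((ncard_pos hB.sdiff).mpr (nonempty_of_ssubset hAB)).ne'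
  have hone : (B \ A).ncard ≠ 1 := by
    intro h
    obtain ⟨e, he⟩ := ncard_eq_one.mp h
    have heBA : e ∈ B \ A := he ▸ mem_singleton e
    refine hins e heBA.1 heBA.2 ?_
    rw [← sdiff_union_of_subset hAB.subset, he, singleton_union]
  have := ncard_le_ncard hAB.subset hB
  omega

end Set

namespace SimpleGraph

variable {V : Type*}

theorem edgeSet_sup_edge {G : SimpleGraph V} {u v : V} (huv : u ≠ v) :
    (G ⊔ edge u v).edgeSet = insert s(u, v) G.edgeSet := by
  rw [edgeSet_sup, edgeSet_edge_of_ne huv, Set.union_singleton]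

theorem ncard_edgeSet_add_two_le [Finite V] {G H : SimpleGraph V} (hlt : G < H)
    (hedge : ∀ u v, u ≠ v → ¬G.Adj u v → H ≠ G ⊔ edge u v) :
    G.edgeSet.ncard + 2 ≤ H.edgeSet.ncard := by
  refine Set.ncard_add_two_le_of_ssubset (Set.toFinite _) (edgeSet_ssubset_edgeSet.mpr hlt) ?_
  intro e heH heG
  induction e using Sym2.ind with
  | _ u v =>
    have huv : u ≠ v := H.ne_of_adj heH
    rw [← edgeSet_sup_edge huv, Ne, edgeSet_inj]
    exact hedge u v huv heG

theorem ncard_edgeSet_sup_fromEdgeSet [Finite V] {G : SimpleGraph V} {s : Set (Sym2 V)}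
    (hdisj : Disjoint G.edgeSet s) (hdiag : ∀ e ∈ s, ¬e.IsDiag) :
    (G ⊔ fromEdgeSet s).edgeSet.ncard = G.edgeSet.ncard + s.ncard := by
  have hs : s \ Sym2.diagSet = s := (Set.disjoint_left.mpr hdiag).sdiff_eq_left
  rw [edgeSet_sup, edgeSet_fromEdgeSet, hs, Set.ncard_union_eq hdisj]

theorem cycleGraph_not_adj_of_val_add_two {m : ℕ} {i j : Fin (m + 4)} (h : j.val = i.val + 2) :
    ¬(cycleGraph (m + 4)).Adj i j := by
  rw [cycleGraph_adj', Fin.sub_def, Fin.sub_def]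
  have hij : (m + 4 - j + i) % (m + 4) = m + 2 := by
    rw [show m + 4 - j + i = m + 2 by omega]
    exact Nat.mod_eq_of_lt (by omega)
  have hji : (m + 4 - i + j) % (m + 4) = 2 := by
    rw [show m + 4 - i + j = 2 + (m + 4) by omega, Nat.add_mod_right]
    exact Nat.mod_eq_of_lt (by omega)
  simp only [hij, hji]
  omega

theorem not_isChordal_of_induced_square (G : SimpleGraph V) {a b c d : V} (hac : a ≠ c)
    (hbd : b ≠ d) (hab : G.Adj a b) (hbc : G.Adj b c) (hcd : G.Adj c d) (hda : G.Adj d a)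
    (hnac : ¬G.Adj a c) (hnbd : ¬G.Adj b d) : ¬G.IsChordal := by
  intro hG
  have hinj : Function.Injective ![a, b, c, d] := by
    intro x y hxy
    fin_cases x <;> fin_cases y <;> simp_all [G.ne_of_adj, (G.ne_of_adj _).symm]
  refine (hG 4 le_rfl).false ⟨⟨![a, b, c, d], hinj⟩, ?_⟩
  intro x y
  fin_cases x <;> fin_cases y <;> simp_all [cycleGraph_adj, G.adj_comm] <;> decide

theorem isChordal_of_forall_not_adj_eq {G : SimpleGraph V} (e : Sym2 V)
    (h : ∀ x y, x ≠ y → ¬G.Adj x y → s(x, y) = e) : G.IsChordal := by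
  rintro n hn
  obtain ⟨m, rfl⟩ : ∃ m, n = m + 4 := ⟨n - 4, by omega⟩
  refine ⟨fun f => ?_⟩
  have hnonadj : ∀ i j : Fin (m + 4), j.val = i.val + 2 → s(f i, f j) = e := fun i j hij =>
    h _ _ (f.injective.ne (Fin.ne_of_val_ne (by omega)))
      (fun hadj => cycleGraph_not_adj_of_val_add_two hij (f.map_rel_iff.mp hadj))
  have h02 := hnonadj ⟨0, by omega⟩ ⟨2, by omega⟩ rfl
  have h13 := hnonadj ⟨1, by omega⟩ ⟨3, by omega⟩ rfl
  rcases Sym2.eq_iff.mp (h02.trans h13.symm) with ⟨h01, -⟩ | ⟨h03, -⟩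
  · exact absurd (f.injective h01) (by simp)
  · exact absurd (f.injective h03) (by simp)

end SimpleGraph

namespace LMBM3

open SimpleGraph

theorem not_isChordal_of_two_buses_not_adj {G : SimpleGraph V} (hle : Gr ≤ G) {j k : Fin 3}
    (hjk : j ≠ k) (hj : ¬G.Adj (j, 0) (j, 1)) (hk : ¬G.Adj (k, 0) (k, 1)) : ¬G.IsChordal :=
  G.not_isChordal_of_induced_square (a := (j, 0)) (b := (k, 0)) (c := (j, 1)) (d := (k, 1))
    (by simp) (by simp) (hle hjk) (hle hjk.symm) (hle hjk) (hle hjk.symm) hj hk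

theorem not_isChordal_sup_edge {u v : V} (huv : u ≠ v) (hnadj : ¬Gr.Adj u v) :
    ¬(Gr ⊔ edge u v).IsChordal := by
  have hbus : u.1 = v.1 := not_not.mp hnadj
  have hother : ∀ j, j ≠ u.1 → ¬(Gr ⊔ edge u v).Adj (j, 0) (j, 1) := by
    intro j hj hadj
    rcases hadj with hGr | hedge
    · exact hGr rfl
    · rcases (edge_adj u v _ _).mp hedge with ⟨⟨rfl, -⟩ | ⟨rfl, -⟩, -⟩
      · exact hj rfl
      · exact hj hbus.symm
  have htwo_others : ∀ i : Fin 3, ∃ j k, j ≠ i ∧ k ≠ i ∧ j ≠ k := by decide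
  obtain ⟨j, k, hj, hk, hjk⟩ := htwo_others u.1
  exact not_isChordal_of_two_buses_not_adj le_sup_left hjk (hother j hj) (hother k hk)

theorem not_isChordal_Gr : ¬Gr.IsChordal :=
  not_isChordal_of_two_buses_not_adj le_rfl (j := 0) (k := 1) (by decide) (by simp [Gr])
    (by simp [Gr])

theorem isChordal_Hr : Hr.IsChordal := by
  refine isChordal_of_forall_not_adj_eq s((0, 0), (0, 1)) ?_
  simp only [Hr, sup_adj, fromEdgeSet_adj, Gr]
  decide

theorem ncard_edgeSet_Hr : Hr.edgeSet.ncard = Gr.edgeSet.ncard + 2 := by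
  rw [Hr, ncard_edgeSet_sup_fromEdgeSet, Set.ncard_pair (by decide)]
  · rw [Set.disjoint_right]
    rintro e (rfl | rfl) <;> simp [Gr]
  · simp

end LMBM3

open LMBM3 in
/-- Adding any single missing edge to `G^r` never yields a chordal graph; since `G^r`
is itself not chordal, every chordal graph on the six vertices containing `G^r` has at
least two more edges than `G^r`, and `H^r` — which adds exactly two edges — is a
minimal chordal extension of `G^r`. -/
theorem Gr_minimal_chordal_extension :
    (∀ u v : V, u ≠ v → ¬ Gr.Adj u v →
      ¬ (Gr ⊔ SimpleGraph.fromEdgeSet {s(u, v)}).IsChordal) ∧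
    ¬ Gr.IsChordal ∧
    (∀ H : SimpleGraph V, H.IsChordal → Gr ≤ H →
      Gr.edgeSet.ncard + 2 ≤ H.edgeSet.ncard) ∧
    Hr.IsChordal ∧ Gr ≤ Hr ∧ Hr.edgeSet.ncard = Gr.edgeSet.ncard + 2 := by
  refine ⟨fun u v huv hnadj => not_isChordal_sup_edge huv hnadj, not_isChordal_Gr,
    fun H hH hle => ?_, isChordal_Hr, le_sup_left, ncard_edgeSet_Hr⟩
  have hlt : Gr < H := hle.lt_of_ne fun hGH => not_isChordal_Gr (hGH ▸ hH)
  exact SimpleGraph.ncard_edgeSet_add_two_le hlt fun u v huv hnadj hHuv =>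
    not_isChordal_sup_edge huv hnadj (hHuv ▸ hH)
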